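/- Let S be a real 3×3 matrix with singular value decomposition S = U Σ Vᵀ, where U, V are orthogonal and Σ is diagonal with nonnegative entries. Then for every orthogonal matrix R, tr(R·S) ≤ tr(Σ), with equality attained at R = V·Uᵀ. -/
import Mathlib

open Matrix

private lemma diag_le_one (M : Matrix (Fin 3) (Fin 3) ℝ) (hM : M * Mᵀ = 1) (i : Fin 3) :
    M i i ≤ 1 := by
  have h := congrFun (congrFun hM i) i
  simp [Matrix.mul_apply, Matrix.one_apply] at h
  have hle : M i i * M i i ≤ ∑ j, M i j * M i j := by
    apply Finset.single_le_sum (f := fun j => M i j * M i j)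
    · intro j _; exact mul_self_nonneg _
    · simp
  nlinarith [hle, h]

private lemma tr_mul_diag (M Sig : Matrix (Fin 3) (Fin 3) ℝ)
    (hSigDiag : ∀ i j, i ≠ j → Sig i j = 0) :
    (M * Sig).trace = ∑ i, M i i * Sig i i := by
  simp only [Matrix.trace, Matrix.diag, Matrix.mul_apply]
  refine Finset.sum_congr rfl fun i _ => ?_
  rw [Finset.sum_eq_single i]
  · intro j _ hj; rw [hSigDiag j i hj, mul_zero]
  · simp

theorem orthogonal_procrustes
    (U V Sig S : Matrix (Fin 3) (Fin 3) ℝ)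
    (hU : U * Uᵀ = 1) (hV : V * Vᵀ = 1)
    (hSigDiag : ∀ i j, i ≠ j → Sig i j = 0)
    (hSigNonneg : ∀ i, 0 ≤ Sig i i)
    (hS : S = U * Sig * Vᵀ) :
    (∀ R : Matrix (Fin 3) (Fin 3) ℝ, R * Rᵀ = 1 → (R * S).trace ≤ Sig.trace) ∧
      ((V * Uᵀ) * S).trace = Sig.trace := by
  have hUt : Uᵀ * U = 1 := mul_eq_one_comm.mp hU
  have hVt : Vᵀ * V = 1 := mul_eq_one_comm.mp hV
  have key : ∀ R : Matrix (Fin 3) (Fin 3) ℝ, R * Rᵀ = 1 →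
      (R * S).trace = ((Vᵀ * R * U) * Sig).trace := by
    intro R _
    rw [hS]
    have : R * (U * Sig * Vᵀ) = (R * U * Sig) * Vᵀ := by simp only [Matrix.mul_assoc]
    rw [this, Matrix.trace_mul_comm]
    congr 1
    simp only [Matrix.mul_assoc]
  have trSig : Sig.trace = ∑ i, Sig i i := rfl
  constructor
  · intro R hR
    rw [key R hR, tr_mul_diag _ _ hSigDiag, trSig]
    have hM : (Vᵀ * R * U) * (Vᵀ * R * U)ᵀ = 1 := by
      simp only [Matrix.transpose_mul, Matrix.transpose_transpose]
      calc Vᵀ * R * U * (Uᵀ * (Rᵀ * V)) = Vᵀ * (R * (U * Uᵀ) * Rᵀ) * V := by simp only [Matrix.mul_assoc]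
        _ = 1 := by rw [hU, Matrix.mul_one, hR, Matrix.mul_one, hVt]
    apply Finset.sum_le_sum
    intro i _
    have h1 := diag_le_one _ hM i
    nlinarith [hSigNonneg i, h1]
  · have : (V * Uᵀ) * S = V * (Sig * Vᵀ) := by
      rw [hS]
      calc V * Uᵀ * (U * Sig * Vᵀ) = V * (Uᵀ * U) * (Sig * Vᵀ) := by simp only [Matrix.mul_assoc]
        _ = V * (Sig * Vᵀ) := by rw [hUt, Matrix.mul_one]
    rw [this, Matrix.trace_mul_comm, Matrix.mul_assoc, hVt, Matrix.mul_one]
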